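/- arXiv:1609.05043 — 7 statements merged into one kernel-verified Lean document; each statement's English description precedes it below -/
import Mathlib

section
/- Let R be a commutative ring and A ∈ Mat_{n×m}(R). (a) If n ≥ m, then the R-linear map A : R^m → R^n is injective if and only if rk(A) = m. (b) If n ≤ m, then the R-linear map A : R^m → R^n is surjective if and only if 𝒰_n(A) = R. -/
open Matrix

/-- The ideal `𝒰_i(A)` generated by the `i × i` minors of a matrix `A`. -/
def minorsIdeal {R : Type*} [CommRing R] {n m : ℕ}
    (A : Matrix (Fin n) (Fin m) R) (i : ℕ) : Ideal R :=
  Ideal.span {d : R | ∃ (f : Fin i → Fin n) (g : Fin i → Fin m),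
    Function.Injective f ∧ Function.Injective g ∧ d = (A.submatrix f g).det}

/-- The determinantal rank of `A`: the largest `i` such that the annihilator
of `𝒰_i(A)` is zero. -/
noncomputable def detRank {R : Type*} [CommRing R] {n m : ℕ}
    (A : Matrix (Fin n) (Fin m) R) : ℕ :=
  sSup {i : ℕ | i ≤ min n m ∧ (minorsIdeal A i).annihilator = ⊥}

/-!
(a) If `A v = 0` and `B` is an `m × m` submatrix of `A`, multiplying by the adjugate of `B`
gives `det B • v = 0`, so the coordinates of `v` annihilate `𝒰_m(A)`. Conversely (McCoy), let
`A` be injective and `r` annihilate `𝒰_{k+1}(A)` with `k < m`. Border the columns of a `k × k`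
minor `δ` by one more column of `A`; `r` times the signed `k × k` cofactors of this block,
extended by zero, is a vector whose image under `A` consists of `r` times `(k+1)`-minors
(Laplace expansion), hence is zero. By injectivity the vector vanishes, and one of its entries
is `r δ`, so `r` annihilates `𝒰_k(A)`. Descending to `𝒰_0(A) = R` gives `r = 0`.

(b) By Cramer's rule `det B • v` lies in the image of `A` for every `n × n` submatrix `B`, so
`𝒰_n(A) = R` forces surjectivity. Conversely a right inverse `A B = 1` gives
`1 = det (A B) ∈ 𝒰_n(A)` by expanding `det (A B)` multilinearly in the columns of `A`.
-/

namespace Matrix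

section CommSemiring

variable {R : Type*} [CommSemiring R] {ι l m : Type*} [Fintype ι] [Fintype m]

theorem mulVecLin_submatrix_id (A : Matrix l m R) {g : ι → m} (hg : Function.Injective g) :
    (A.submatrix id g).mulVecLin = A.mulVecLin ∘ₗ Function.ExtendByZero.linearMap R g := by
  classical
  refine LinearMap.pi_ext fun j x => ?_
  have hextend : Function.extend g (Pi.single j x) 0 = Pi.single (g j) x := by
    funext k
    by_cases hk : ∃ a, g a = k
    · obtain ⟨a, rfl⟩ := hk
      rw [hg.extend_apply, Pi.single_apply, Pi.single_apply, hg.eq_iff]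
    · rw [Function.extend_apply' _ _ _ hk, Pi.zero_apply, Pi.single_apply, if_neg]
      rintro rfl
      exact hk ⟨j, rfl⟩
  change _ = A.mulVecLin (Function.extend g (Pi.single j x) 0)
  rw [hextend]
  ext i
  simp

theorem injective_mulVecLin_submatrix {A : Matrix l m R} (hA : Function.Injective A.mulVecLin)
    {g : ι → m} (hg : Function.Injective g) :
    Function.Injective (A.submatrix id g).mulVecLin := by
  rw [mulVecLin_submatrix_id A hg]
  exact hA.comp (Function.extend_injective hg (0 : m → R))

theorem range_mulVecLin_submatrix_le (A : Matrix l m R) {g : ι → m}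
    (hg : Function.Injective g) :
    LinearMap.range (A.submatrix id g).mulVecLin ≤ LinearMap.range A.mulVecLin := by
  rw [mulVecLin_submatrix_id A hg, LinearMap.range_comp]
  exact LinearMap.map_le_range

theorem exists_mul_eq_one_of_surjective [Fintype l] [DecidableEq l] {A : Matrix l m R}
    (h : Function.Surjective A.mulVecLin) : ∃ B : Matrix m l R, A * B = 1 := by
  choose s hs using h
  refine ⟨of fun k j => s (Pi.single j 1) k, ext fun i j => ?_⟩
  have hcol := congrFun (hs (Pi.single j 1)) i
  simpa [mul_apply, mulVec, dotProduct, one_apply, Pi.single_apply, eq_comm] using hcol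

end CommSemiring

section CommRing

variable {R : Type*} [CommRing R] {ι : Type*} [Fintype ι] [DecidableEq ι]

/-- The Cauchy–Binet formula before grouping the terms by the image of `p`. -/
theorem det_mul_eq_sum_prod_mul_det_submatrix {m : Type*} [Fintype m]
    (A : Matrix ι m R) (B : Matrix m ι R) :
    (A * B).det = ∑ p : ι → m, (∏ i, B (p i) i) * (A.submatrix id p).det := by
  simp only [det_apply', mul_apply, Finset.prod_univ_sum, Finset.mul_sum,
    Fintype.piFinset_univ, submatrix_apply, id, Finset.prod_mul_distrib]
  rw [Finset.sum_comm]
  exact Finset.sum_congr rfl fun p _ => Finset.sum_congr rfl fun σ _ => by ring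

theorem det_smul_eq_zero_of_mulVec_eq_zero {B : Matrix ι ι R} {v : ι → R} (h : B *ᵥ v = 0) :
    B.det • v = 0 := by
  rw [← one_mulVec v, ← smul_mulVec, ← adjugate_mul, ← mulVec_mulVec, h, mulVec_zero]

theorem det_smul_mem_range_mulVecLin (B : Matrix ι ι R) (v : ι → R) :
    B.det • v ∈ LinearMap.range B.mulVecLin :=
  ⟨cramer B v, mulVec_cramer B v⟩

end CommRing

end Matrix

section minorsIdeal

variable {R : Type*} [CommRing R] {n m : ℕ} (A : Matrix (Fin n) (Fin m) R)

theorem det_submatrix_mem_minorsIdeal {i : ℕ} {f : Fin i → Fin n} {g : Fin i → Fin m}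
    (hf : Function.Injective f) (hg : Function.Injective g) :
    (A.submatrix f g).det ∈ minorsIdeal A i :=
  Ideal.subset_span ⟨f, g, hf, hg, rfl⟩

theorem mem_annihilator_minorsIdeal {i : ℕ} {r : R} :
    r ∈ (minorsIdeal A i).annihilator ↔ ∀ (f : Fin i → Fin n) (g : Fin i → Fin m),
      Function.Injective f → Function.Injective g → r * (A.submatrix f g).det = 0 := by
  rw [minorsIdeal, Submodule.mem_annihilator_span]
  constructor
  · intro h f g hf hg
    exact h ⟨_, f, g, hf, hg, rfl⟩
  · rintro h ⟨_, f, g, hf, hg, rfl⟩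
    exact h f g hf hg

theorem annihilator_minorsIdeal_zero : (minorsIdeal A 0).annihilator = ⊥ := by
  refine (Submodule.eq_bot_iff _).2 fun r hr => ?_
  simpa using (mem_annihilator_minorsIdeal A).1 hr Fin.elim0 Fin.elim0
    (Function.injective_of_subsingleton _) (Function.injective_of_subsingleton _)

theorem detRank_eq_iff_annihilator_minorsIdeal_eq_bot (h : m ≤ n) :
    detRank A = m ↔ (minorsIdeal A m).annihilator = ⊥ := by
  set S := {i : ℕ | i ≤ min n m ∧ (minorsIdeal A i).annihilator = ⊥}
  have hS : BddAbove S := ⟨min n m, fun i hi => hi.1⟩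
  constructor
  · intro hrank
    have hmem : detRank A ∈ S :=
      Nat.sSup_mem ⟨0, Nat.zero_le _, annihilator_minorsIdeal_zero A⟩ hS
    rw [hrank] at hmem
    exact hmem.2
  · intro hann
    refine IsGreatest.csSup_eq ⟨⟨le_min h le_rfl, hann⟩, fun i hi => ?_⟩
    exact hi.1.trans (min_le_right n m)

theorem injective_mulVecLin_of_annihilator_minorsIdeal_eq_bot
    (h : (minorsIdeal A m).annihilator = ⊥) : Function.Injective A.mulVecLin := by
  refine (injective_iff_map_eq_zero _).2 fun v hv => funext fun j => ?_
  have hAv : A *ᵥ v = 0 := hv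
  have hj : v j ∈ (minorsIdeal A m).annihilator := by
    refine (mem_annihilator_minorsIdeal A).2 fun f g _ hg => ?_
    let σ : Equiv.Perm (Fin m) := Equiv.ofBijective g (Finite.injective_iff_bijective.1 hg)
    have hdet : (A.submatrix f g).det = Equiv.Perm.sign σ * (A.submatrix f id).det :=
      det_permute' σ (A.submatrix f id)
    have hker : A.submatrix f id *ᵥ v = 0 := funext fun i => congrFun hAv (f i)
    have hvj : (A.submatrix f id).det * v j = 0 :=
      congrFun (det_smul_eq_zero_of_mulVec_eq_zero hker) j
    rw [hdet]
    linear_combination (Equiv.Perm.sign σ : R) * hvj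
  rw [h] at hj
  exact (Submodule.mem_bot R).1 hj

theorem det_submatrix_cons {k : ℕ} (f : Fin k → Fin n) (g : Fin (k + 1) → Fin m) (i : Fin n) :
    (A.submatrix (Fin.cons i f) g).det =
      ∑ j : Fin (k + 1), (-1) ^ (j : ℕ) * A i (g j) * (A.submatrix f (g ∘ j.succAbove)).det :=
  det_succ_row_zero _

theorem mem_annihilator_minorsIdeal_of_succ (hA : Function.Injective A.mulVecLin) {k : ℕ}
    (hk : k < m) {r : R} (hr : r ∈ (minorsIdeal A (k + 1)).annihilator) :
    r ∈ (minorsIdeal A k).annihilator := by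
  rw [mem_annihilator_minorsIdeal] at hr ⊢
  intro f g hf hg
  obtain ⟨j₀, hj₀⟩ : ∃ j₀, j₀ ∉ Set.range g := by
    by_contra! hsurj
    have hcard := Fintype.card_le_of_surjective g hsurj
    simp only [Fintype.card_fin] at hcard
    omega
  set g' : Fin (k + 1) → Fin m := Fin.cons j₀ g
  have hg' : Function.Injective g' := Fin.cons_injective_iff.2 ⟨hj₀, hg⟩
  set u : Fin (k + 1) → R :=
    fun j => r * ((-1) ^ (j : ℕ) * (A.submatrix f (g' ∘ j.succAbove)).det)
  have hu : A.submatrix id g' *ᵥ u = 0 := by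
    funext i
    have hexp : (A.submatrix id g' *ᵥ u) i = r * (A.submatrix (Fin.cons i f) g').det := by
      rw [det_submatrix_cons, Finset.mul_sum, mulVec, dotProduct]
      exact Finset.sum_congr rfl fun j _ => by simp only [submatrix_apply, id, u]; ring
    rw [hexp, Pi.zero_apply]
    by_cases hi : i ∈ Set.range f
    · obtain ⟨l, rfl⟩ := hi
      rw [det_zero_of_row_eq (Fin.succ_ne_zero l).symm rfl, mul_zero]
    · exact hr _ g' (Fin.cons_injective_iff.2 ⟨hi, hf⟩) hg'
  have hu0 : u = 0 := injective_mulVecLin_submatrix hA hg' (by simpa using hu)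
  simpa [u, g'] using congrFun hu0 0

theorem annihilator_minorsIdeal_eq_bot_of_injective (hA : Function.Injective A.mulVecLin) :
    (minorsIdeal A m).annihilator = ⊥ := by
  refine (Submodule.eq_bot_iff _).2 fun r hr => ?_
  have h0 : r ∈ (minorsIdeal A 0).annihilator :=
    Nat.decreasingInduction (motive := fun k _ => r ∈ (minorsIdeal A k).annihilator)
      (fun _ hk => mem_annihilator_minorsIdeal_of_succ A hA hk) hr (Nat.zero_le m)
  rw [annihilator_minorsIdeal_zero] at h0
  exact (Submodule.mem_bot R).1 h0

theorem injective_mulVecLin_iff_annihilator_minorsIdeal_eq_bot :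
    Function.Injective A.mulVecLin ↔ (minorsIdeal A m).annihilator = ⊥ :=
  ⟨annihilator_minorsIdeal_eq_bot_of_injective A,
    injective_mulVecLin_of_annihilator_minorsIdeal_eq_bot A⟩

theorem minorsIdeal_le_colon_range :
    minorsIdeal A n ≤ (LinearMap.range A.mulVecLin).colon Set.univ := by
  refine Ideal.span_le.2 ?_
  rintro _ ⟨f, g, hf, hg, rfl⟩
  refine Submodule.mem_colon.2 fun v _ => ?_
  let σ : Equiv.Perm (Fin n) := Equiv.ofBijective f (Finite.injective_iff_bijective.1 hf)
  have hdet : (A.submatrix f g).det = Equiv.Perm.sign σ * (A.submatrix id g).det :=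
    det_permute σ (A.submatrix id g)
  rw [hdet, mul_smul]
  exact Submodule.smul_mem _ _
    (range_mulVecLin_submatrix_le A hg (det_smul_mem_range_mulVecLin _ v))

theorem surjective_mulVecLin_of_minorsIdeal_eq_top (h : minorsIdeal A n = ⊤) :
    Function.Surjective A.mulVecLin := by
  have h1 : (1 : R) ∈ (LinearMap.range A.mulVecLin).colon Set.univ :=
    minorsIdeal_le_colon_range A (h ▸ Submodule.mem_top)
  intro v
  simpa using Submodule.mem_colon.1 h1 v (Set.mem_univ v)

theorem det_mul_mem_minorsIdeal (B : Matrix (Fin m) (Fin n) R) :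
    (A * B).det ∈ minorsIdeal A n := by
  rw [det_mul_eq_sum_prod_mul_det_submatrix]
  refine Ideal.sum_mem _ fun p _ => Ideal.mul_mem_left _ _ ?_
  by_cases hp : Function.Injective p
  · exact det_submatrix_mem_minorsIdeal A Function.injective_id hp
  · obtain ⟨a, b, hab, hne⟩ := Function.not_injective_iff.1 hp
    rw [det_zero_of_column_eq hne fun k => by simp [hab]]
    exact zero_mem _

theorem minorsIdeal_eq_top_of_surjective (h : Function.Surjective A.mulVecLin) :
    minorsIdeal A n = ⊤ := by
  obtain ⟨B, hB⟩ := exists_mul_eq_one_of_surjective h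
  rw [Ideal.eq_top_iff_one, ← det_one (n := Fin n), ← hB]
  exact det_mul_mem_minorsIdeal A B

theorem surjective_mulVecLin_iff_minorsIdeal_eq_top :
    Function.Surjective A.mulVecLin ↔ minorsIdeal A n = ⊤ :=
  ⟨minorsIdeal_eq_top_of_surjective A, surjective_mulVecLin_of_minorsIdeal_eq_top A⟩

end minorsIdeal

/-- Let `A ∈ Mat_{n×m}(R)`.  (a) If `n ≥ m` then `A : R^m → R^n` is injective
iff `rk(A) = m`.  (b) If `n ≤ m` then `A : R^m → R^n` is surjective iff
`𝒰_n(A) = R`. -/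
theorem injective_iff_detRank_and_surjective_iff_minorsIdeal
    {R : Type*} [CommRing R] {n m : ℕ} (A : Matrix (Fin n) (Fin m) R) :
    (m ≤ n → (Function.Injective A.mulVecLin ↔ detRank A = m)) ∧
    (n ≤ m → (Function.Surjective A.mulVecLin ↔ minorsIdeal A n = ⊤)) :=
  ⟨fun hmn => (injective_mulVecLin_iff_annihilator_minorsIdeal_eq_bot A).trans
      (detRank_eq_iff_annihilator_minorsIdeal_eq_bot A hmn).symm,
    fun _ => surjective_mulVecLin_iff_minorsIdeal_eq_top A⟩
end

section
/- Let R be a commutative ring and A ∈ Mat_{n×m}(R) with n ≤ m. Then the R-linear map A : R^m → R^n is surjective if and only if for every prime ideal 𝔭 of R, the matrix A(𝔭) obtained by reducing A modulo 𝔭 has rank n over the residue field k(𝔭) = R_𝔭/𝔭R_𝔭. -/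
/-!
Surjectivity of `A` means that `A` has a right inverse, and a right inverse survives every base
change; over a field it means rank `n`. Conversely, surjectivity is local on the maximal ideals,
and over a local ring a right inverse modulo the maximal ideal lifts: if `A C ≡ 1`, then
`det (A C)` is a unit, so `C (A C)⁻¹` is a right inverse of `A`.
-/

namespace Matrix

variable {m n : Type*} [Fintype m] [Fintype n]

theorem rank_eq_card_iff_surjective_mulVec {K : Type*} [Field K] (A : Matrix m n K) :
    A.rank = Fintype.card m ↔ Function.Surjective A.mulVec := by
  rw [← coe_mulVecLin, ← LinearMap.range_eq_top, rank, Submodule.eq_top_iff_finrank_eq,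
    Module.finrank_fintype_fun_eq_card]

theorem mulVec_map_surjective [DecidableEq m] {R S : Type*} [Semiring R] [Semiring S]
    (f : R →+* S) {A : Matrix m n R} (hA : Function.Surjective A.mulVec) :
    Function.Surjective (A.map f).mulVec := by
  obtain ⟨B, hAB⟩ := mulVec_surjective_iff_exists_right_inverse.mp hA
  exact mulVec_surjective_iff_exists_right_inverse.mpr
    ⟨B.map f, by rw [← Matrix.map_mul, hAB, Matrix.map_one f f.map_zero f.map_one]⟩

theorem mulVec_surjective_of_map_residue [DecidableEq m] {S : Type*} [CommRing S] [IsLocalRing S]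
    {B : Matrix m n S} (hB : Function.Surjective (B.map (IsLocalRing.residue S)).mulVec) :
    Function.Surjective B.mulVec := by
  obtain ⟨C, hC⟩ := mulVec_surjective_iff_exists_right_inverse.mp hB
  obtain ⟨C, rfl⟩ : ∃ C' : Matrix n m S, C'.map (IsLocalRing.residue S) = C :=
    ⟨C.map (Function.surjInv IsLocalRing.residue_surjective),
      by ext; simp [Function.surjInv_eq]⟩
  have hdet : IsUnit (B * C).det := by
    rw [← IsLocalRing.residue_ne_zero_iff_isUnit, RingHom.map_det, RingHom.mapMatrix_apply,
      Matrix.map_mul, hC, det_one]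
    exact one_ne_zero
  exact mulVec_surjective_iff_exists_right_inverse.mpr
    ⟨C * (B * C)⁻¹, by rw [← Matrix.mul_assoc, mul_nonsing_inv _ hdet]⟩

theorem mulVec_surjective_of_localization_maximal {R : Type*} [CommRing R] {A : Matrix m n R}
    (hA : ∀ (P : Ideal R) [P.IsMaximal],
      Function.Surjective (A.map (algebraMap R (Localization.AtPrime P))).mulVec) :
    Function.Surjective A.mulVec := by
  let locN (P : Ideal R) [P.IsMaximal] : (n → R) →ₗ[R] n → Localization.AtPrime P :=
    LinearMap.pi fun j ↦ Algebra.linearMap R _ ∘ₗ LinearMap.proj j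
  let locM (P : Ideal R) [P.IsMaximal] : (m → R) →ₗ[R] m → Localization.AtPrime P :=
    LinearMap.pi fun i ↦ Algebra.linearMap R _ ∘ₗ LinearMap.proj i
  refine surjective_of_isLocalized_maximal _ locN _ locM A.mulVecLin fun P _ ↦ ?_
  have : IsLocalizedModule.map P.primeCompl (locN P) (locM P) A.mulVecLin =
      (A.map (algebraMap R _)).mulVecLin.restrictScalars R :=
    IsLocalizedModule.linearMap_ext P.primeCompl (locN P) (locM P) <| by
      rw [IsLocalizedModule.map_comp]
      ext v i
      exact (algebraMap R (Localization.AtPrime P)).map_mulVec A v i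
  rw [this]
  exact hA P

end Matrix

theorem surjective_iff_rank_residueField_general {R : Type*} [CommRing R] {n m : ℕ}
    (A : Matrix (Fin n) (Fin m) R) :
    Function.Surjective A.mulVecLin ↔
      ∀ (p : Ideal R) (_ : p.IsPrime),
        (A.map ((IsLocalRing.residue (Localization.AtPrime p)).comp
          (algebraMap R (Localization.AtPrime p)))).rank = n := by
  rw [Matrix.coe_mulVecLin]
  constructor
  · intro hA p _
    have hsurj := Matrix.mulVec_map_surjective ((IsLocalRing.residue (Localization.AtPrime p)).comp
      (algebraMap R (Localization.AtPrime p))) hA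
    simpa using (Matrix.rank_eq_card_iff_surjective_mulVec _).mpr hsurj
  · intro h
    refine Matrix.mulVec_surjective_of_localization_maximal fun P _ ↦
      Matrix.mulVec_surjective_of_map_residue <|
        (Matrix.rank_eq_card_iff_surjective_mulVec _).mp ?_
    simpa [Matrix.map_map] using h P inferInstance

/-- `A : R^m → R^n` (with `n ≤ m`) is surjective iff for every prime ideal
`𝔭` of `R` the reduction of `A` modulo `𝔭`, i.e. the image of `A` in the
residue field `k(𝔭) = R_𝔭/𝔭R_𝔭`, has rank `n`. -/
theorem surjective_iff_rank_residueField {R : Type*} [CommRing R] {n m : ℕ}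
    (hnm : n ≤ m) (A : Matrix (Fin n) (Fin m) R) :
    Function.Surjective A.mulVecLin ↔
      ∀ (p : Ideal R) (_ : p.IsPrime),
        (A.map ((IsLocalRing.residue (Localization.AtPrime p)).comp
          (algebraMap R (Localization.AtPrime p)))).rank = n :=
  surjective_iff_rank_residueField_general A
end

section
/- Let R be a commutative ring of Krull dimension 0 and A ∈ Mat_{n×n}(R). Then A is invertible if and only if rk(A) = n. -/
open Matrix

/-- In a zero-dimensional commutative ring, every regular element is a unit. -/
lemma isUnit_of_regular_of_dim_zero {R : Type*} [CommRing R]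
    (hdim : ∀ p : Ideal R, p.IsPrime → p.IsMaximal) (d : R)
    (hreg : ∀ x : R, x * d = 0 → x = 0) : IsUnit d := by
  by_contra hd
  obtain ⟨m, hm, hdm⟩ := exists_max_ideal_of_mem_nonunits (mem_nonunits_iff.mpr hd)
  haveI := hm.isPrime
  let S := Localization.AtPrime m
  have hnil : IsNilpotent (algebraMap R S d) := by
    rw [nilpotent_iff_mem_prime]
    intro q hq
    have hcom : (q.comap (algebraMap R S)).IsPrime := hq.comap _
    have hle : q.comap (algebraMap R S) ≤ m := by
      intro x hx
      by_contra hxm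
      have hu := IsLocalization.map_units S (⟨x, hxm⟩ : m.primeCompl)
      exact hq.ne_top (q.eq_top_of_isUnit_mem hx hu)
    have heq : q.comap (algebraMap R S) = m := (hdim _ hcom).eq_of_le hm.ne_top hle
    rw [← heq] at hdm
    exact hdm
  obtain ⟨k, hk⟩ := hnil
  rw [← map_pow, IsLocalization.map_eq_zero_iff m.primeCompl] at hk
  obtain ⟨s, hs⟩ := hk
  have key : ∀ k (x : R), x * d ^ k = 0 → x = 0 := by
    intro k
    induction k with
    | zero => intro x hx; simpa using hx
    | succ k ih =>
      intro x hx
      rw [pow_succ, ← mul_assoc] at hx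
      exact ih _ (hreg _ hx)
  have hs0 : (s : R) = 0 := key k s hs
  exact s.2 (by rw [hs0]; exact m.zero_mem)

lemma minorsIdeal_self {R : Type*} [CommRing R] {n : ℕ}
    (A : Matrix (Fin n) (Fin n) R) :
    minorsIdeal A n = Ideal.span {A.det} := by
  apply le_antisymm
  · rw [minorsIdeal, Ideal.span_le]
    rintro d ⟨f, g, hf, hg, rfl⟩
    have hfb : Function.Bijective f := (Finite.injective_iff_bijective).mp hf
    have hgb : Function.Bijective g := (Finite.injective_iff_bijective).mp hg
    let e := Equiv.ofBijective f hfb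
    let e' := Equiv.ofBijective g hgb
    have heq : A.submatrix f g = (A.submatrix e e).submatrix id (e'.trans e.symm) := by
      ext i j
      simp only [Matrix.submatrix_apply, id_eq, Equiv.trans_apply, Equiv.apply_symm_apply]
      rfl
    rw [heq, Matrix.det_permute', Matrix.det_submatrix_equiv_self]
    exact Ideal.mem_span_singleton.mpr (Dvd.intro_left _ rfl)
  · rw [Ideal.span_le, Set.singleton_subset_iff]
    apply Ideal.subset_span
    exact ⟨id, id, Function.injective_id, Function.injective_id, by simp⟩

/-- Over a commutative ring of Krull dimension `0` (every prime ideal is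
maximal), a square matrix `A ∈ Mat_{n×n}(R)` is invertible iff `rk(A) = n`. -/
theorem isUnit_iff_detRank_of_dim_zero {R : Type*} [CommRing R]
    (hdim : ∀ p : Ideal R, p.IsPrime → p.IsMaximal) {n : ℕ}
    (A : Matrix (Fin n) (Fin n) R) :
    IsUnit A ↔ detRank A = n := by
  set Sset : Set ℕ := {i : ℕ | i ≤ min n n ∧ (minorsIdeal A i).annihilator = ⊥} with hSset
  have h0 : 0 ∈ Sset := by
    constructor
    · exact Nat.zero_le _
    · have h1 : (1 : R) ∈ minorsIdeal A 0 := by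
        apply Ideal.subset_span
        exact ⟨Fin.elim0, Fin.elim0, fun x => x.elim0, fun x => x.elim0,
          (Matrix.det_fin_zero).symm⟩
      rw [Submodule.eq_bot_iff]
      intro x hx
      have := (Submodule.mem_annihilator.mp hx) 1 h1
      simpa using this
  have hbdd : BddAbove Sset := ⟨n, fun i hi => le_trans hi.1 (min_le_left _ _)⟩
  have hiff : detRank A = n ↔ n ∈ Sset := by
    constructor
    · intro h
      have := Nat.sSup_mem ⟨0, h0⟩ hbdd
      rwa [show sSup Sset = detRank A from rfl, h] at this
    · intro hn
      exact le_antisymm (csSup_le ⟨0, h0⟩ fun i hi => le_trans hi.1 (min_le_left _ _))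
        (le_csSup hbdd hn)
  rw [hiff]
  have hmemiff : n ∈ Sset ↔ (Ideal.span {A.det}).annihilator = ⊥ := by
    rw [hSset, Set.mem_setOf_eq, minorsIdeal_self]
    simp
  rw [hmemiff]
  constructor
  · intro hA
    have hdet : IsUnit A.det := A.isUnit_iff_isUnit_det.mp hA
    rw [Submodule.eq_bot_iff]
    intro x hx
    have := (Submodule.mem_annihilator.mp hx) A.det (Ideal.mem_span_singleton_self _)
    rw [smul_eq_mul] at this
    exact hdet.mul_left_eq_zero.mp this
  · intro hann
    have hreg : ∀ x : R, x * A.det = 0 → x = 0 := by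
      intro x hx
      have hxmem : x ∈ (Ideal.span {A.det} : Ideal R).annihilator := by
        rw [Submodule.mem_annihilator]
        intro y hy
        obtain ⟨c, rfl⟩ := Ideal.mem_span_singleton.mp hy
        rw [smul_eq_mul, ← mul_assoc, hx, zero_mul]
      rw [hann] at hxmem
      simpa using hxmem
    exact A.isUnit_iff_isUnit_det.mpr
      (isUnit_of_regular_of_dim_zero hdim A.det hreg)
end

section
/- Let 𝔽 be a field with algebraic closure 𝔽̄ and let A(z) ∈ Mat_{n×m}(𝔽[z]) with n ≤ m. Then the 𝔽[z]-linear map A(z) : 𝔽[z]^m → 𝔽[z]^n is surjective if and only if for every z₀ ∈ 𝔽̄ the matrix A(z₀) (obtained by evaluating every entry at z₀) has rank n over 𝔽̄. -/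
/-!
Surjectivity of `A(z)` means `A(z)` has a right inverse over `𝔽[z]`, and a right inverse survives
evaluation at any `z₀`, forcing full rank. Conversely, if the ideal of maximal minors of `A(z)`
were proper it would be principal, generated by a nonconstant polynomial; at a root `z₀ ∈ 𝔽̄` all
maximal minors of `A(z₀)` would vanish, so `A(z₀)` could not have full rank. Hence that ideal is
the unit ideal, and a combination `∑ c_f · det A_f = 1` of minors assembles the adjugates of the
square submatrices `A_f` into a right inverse.
-/

open Matrix Polynomial

namespace Matrix

variable {m n : Type*} [Fintype m] [DecidableEq m]

def maximalMinorsIdeal {R : Type*} [CommRing R] (A : Matrix m n R) : Ideal R :=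
  Ideal.span (Set.range fun f : m ↪ n => (A.submatrix id f).det)

theorem det_submatrix_mem_maximalMinorsIdeal {R : Type*} [CommRing R] (A : Matrix m n R)
    (f : m ↪ n) : (A.submatrix id f).det ∈ A.maximalMinorsIdeal :=
  Ideal.subset_span ⟨f, rfl⟩

theorem det_submatrix_map {R S : Type*} [CommRing R] [CommRing S] (φ : R →+* S)
    (A : Matrix m n R) (f : m ↪ n) :
    ((A.map φ).submatrix id f).det = φ (A.submatrix id f).det := by
  rw [submatrix_map, RingHom.map_det]
  rfl

theorem exists_mul_eq_one_of_maximalMinorsIdeal_eq_top {R : Type*} [CommRing R]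
    [Fintype n] [DecidableEq n] {A : Matrix m n R} (h : A.maximalMinorsIdeal = ⊤) :
    ∃ B : Matrix n m R, A * B = 1 := by
  obtain ⟨c, hc⟩ := Ideal.mem_span_range_iff_exists_fun.1 ((Ideal.eq_top_iff_one _).1 h)
  let S : (m ↪ n) → Matrix n m R := fun f => (1 : Matrix n n R).submatrix id f
  have hS : ∀ f, A * (S f * (A.submatrix id f).adjugate) = (A.submatrix id f).det • 1 := by
    intro f
    rw [← Matrix.mul_assoc, show A * S f = A.submatrix id f by
      simpa using mul_submatrix_one (Equiv.refl n) f A, mul_adjugate]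
  refine ⟨∑ f, c f • (S f * (A.submatrix id f).adjugate), ?_⟩
  simp only [Matrix.mul_sum, Matrix.mul_smul, hS, smul_smul, ← Finset.sum_smul, hc, one_smul]

theorem rank_eq_card_of_mul_eq_one {R : Type*} [CommRing R] [StrongRankCondition R] [Fintype n]
    {A : Matrix m n R} {B : Matrix n m R} (h : A * B = 1) : A.rank = Fintype.card m :=
  le_antisymm (rank_le_card_height A) (by simpa [h] using rank_mul_le_left A B)

theorem exists_det_submatrix_ne_zero_of_rank_eq_card {K : Type*} [Field K] [Fintype n]
    {A : Matrix m n K} (h : A.rank = Fintype.card m) : ∃ f : m ↪ n, (A.submatrix id f).det ≠ 0 := by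
  obtain ⟨κ, a, ha, hspan, hli⟩ := exists_linearIndependent' K A.col
  have : Fintype κ := Fintype.ofInjective a ha
  have hcard : Fintype.card κ = Fintype.card m := by
    rw [← finrank_span_eq_card hli, hspan, ← rank_eq_finrank_span_cols, h]
  let e : m ≃ κ := (Fintype.equivOfCardEq hcard).symm
  refine ⟨⟨a ∘ e, ha.comp e.injective⟩, ?_⟩
  rw [← isUnit_iff_ne_zero, ← isUnit_iff_isUnit_det, ← linearIndependent_cols_iff_isUnit]
  exact hli.comp e e.injective

end Matrix

theorem Polynomial.exists_aeval_eq_zero_of_ne_top {F L : Type*} [Field F] [Field L]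
    [IsAlgClosed L] [Algebra F L] {I : Ideal F[X]} (hI : I ≠ ⊤) :
    ∃ z : L, ∀ p ∈ I, aeval z p = 0 := by
  obtain ⟨p, rfl⟩ := (IsPrincipalIdealRing.principal I).principal
  have hp : p.degree ≠ 0 := fun h =>
    hI (Ideal.span_singleton_eq_top.2 (isUnit_iff_degree_eq_zero.2 h))
  obtain ⟨z, hz⟩ := IsAlgClosed.exists_aeval_eq_zero L p hp
  refine ⟨z, fun q hq => ?_⟩
  obtain ⟨r, rfl⟩ := Ideal.mem_span_singleton'.1 hq
  simp [hz]

theorem surjective_iff_rank_eval_algClosure_general {F : Type*} [Field F] {n m : ℕ}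
    (A : Matrix (Fin n) (Fin m) (Polynomial F)) :
    Function.Surjective A.mulVecLin ↔
      ∀ z₀ : AlgebraicClosure F,
        (A.map (fun q => Polynomial.aeval z₀ q)).rank = n := by
  rw [coe_mulVecLin, mulVec_surjective_iff_exists_right_inverse]
  constructor
  · rintro ⟨B, hAB⟩ z₀
    have hmap : A.map (aeval z₀) * B.map (aeval z₀) = 1 := by
      rw [← Matrix.map_mul, hAB, Matrix.map_one _ (map_zero _) (map_one _)]
    simpa using rank_eq_card_of_mul_eq_one hmap
  · intro hrank
    apply exists_mul_eq_one_of_maximalMinorsIdeal_eq_top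
    by_contra hI
    obtain ⟨z₀, hz₀⟩ := exists_aeval_eq_zero_of_ne_top (L := AlgebraicClosure F) hI
    obtain ⟨f, hf⟩ := exists_det_submatrix_ne_zero_of_rank_eq_card
      ((hrank z₀).trans (Fintype.card_fin n).symm)
    exact hf ((det_submatrix_map (aeval z₀).toRingHom A f).trans
      (hz₀ _ (det_submatrix_mem_maximalMinorsIdeal A f)))

/-- A polynomial matrix `A(z) ∈ Mat_{n×m}(𝔽[z])` with `n ≤ m` defines a
surjective map `𝔽[z]^m → 𝔽[z]^n` iff for every `z₀` in the algebraic closure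
`𝔽̄` the evaluated matrix `A(z₀)` has rank `n`. -/
theorem surjective_iff_rank_eval_algClosure {F : Type*} [Field F] {n m : ℕ}
    (hnm : n ≤ m) (A : Matrix (Fin n) (Fin m) (Polynomial F)) :
    Function.Surjective A.mulVecLin ↔
      ∀ z₀ : AlgebraicClosure F,
        (A.map (fun q => Polynomial.aeval z₀ q)).rank = n :=
  surjective_iff_rank_eval_algClosure_general A
end

section
/- Let R = R₁ × ⋯ × R_t be a finite product of commutative rings with structural idempotents e₁,…,e_t, and let A(z) ∈ Mat_{p×q₁}(R[z]) and B(z) ∈ Mat_{p×q₂}(R[z]). Then Ker(A(z)|B(z)) = e₁·Ker(π₁(A)(z)|π₁(B)(z)) + ⋯ + e_t·Ker(π_t(A)(z)|π_t(B)(z)), i.e. the kernel of the pair over R[z] is the direct sum of the kernels of the componentwise projected pairs over each R_j[z]. -/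
open Matrix Polynomial

/-- `Ker(A|B) := {u | ∃ x, A x + B u = 0}` for a pair of matrices over a
commutative ring. -/
def kerPair {S : Type*} [CommRing S] {p q₁ q₂ : ℕ}
    (A : Matrix (Fin p) (Fin q₁) S) (B : Matrix (Fin p) (Fin q₂) S) :
    Set (Fin q₂ → S) :=
  {u | ∃ x : Fin q₁ → S, A.mulVec x + B.mulVec u = 0}

section Aux

variable {t : ℕ} {R : Fin t → Type*} [∀ j, CommRing (R j)]

/-- Coefficientwise lift of a polynomial over `R j` to a polynomial over the
product ring, placing coefficients in the `j`-th slot. -/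
noncomputable def liftj (j : Fin t) (p : Polynomial (R j)) :
    Polynomial (∀ i, R i) :=
  p.sum fun n a => Polynomial.monomial n (Pi.single j a)

lemma liftj_map_same (j : Fin t) (p : Polynomial (R j)) :
    (liftj j p).map (Pi.evalRingHom R j) = p := by
  unfold liftj Polynomial.sum
  rw [Polynomial.map_sum]
  simp only [Polynomial.map_monomial, Pi.evalRingHom_apply, Pi.single_eq_same]
  exact p.sum_monomial_eq

lemma liftj_map_ne {i j : Fin t} (h : i ≠ j) (p : Polynomial (R j)) :
    (liftj j p).map (Pi.evalRingHom R i) = 0 := by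
  unfold liftj Polynomial.sum
  rw [Polynomial.map_sum]
  simp only [Polynomial.map_monomial, Pi.evalRingHom_apply,
    Pi.single_eq_of_ne h, Polynomial.monomial_zero_right, Finset.sum_const_zero]

lemma poly_pi_eq_zero (p : Polynomial (∀ j, R j))
    (h : ∀ j, p.map (Pi.evalRingHom R j) = 0) : p = 0 := by
  ext n j
  have := congrArg (fun q => Polynomial.coeff q n) (h j)
  simpa [Polynomial.coeff_map] using this

lemma mulVec_polymap {S T : Type*} [CommRing S] [CommRing T] (f : S →+* T)
    {p q : ℕ} (A : Matrix (Fin p) (Fin q) (Polynomial S))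
    (v : Fin q → Polynomial S) (i : Fin p) :
    ((A.map (Polynomial.map f)).mulVec fun k => (v k).map f) i
      = (A.mulVec v i).map f := by
  simp [Matrix.mulVec, dotProduct, Polynomial.map_sum,
    Polynomial.map_mul, Matrix.map_apply]

end Aux

/-- Over a finite product ring `R = R₁ × ⋯ × R_t` with structural idempotents
`e_j`, the kernel of a pair of polynomial matrices decomposes as
`Ker(A(z)|B(z)) = e₁·Ker(π₁(A)|π₁(B)) + ⋯ + e_t·Ker(π_t(A)|π_t(B))`. -/
theorem kerPair_prod_decomposition {t p q₁ q₂ : ℕ} (R : Fin t → Type*)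
    [∀ j, CommRing (R j)]
    (A : Matrix (Fin p) (Fin q₁) (Polynomial (∀ j, R j)))
    (B : Matrix (Fin p) (Fin q₂) (Polynomial (∀ j, R j))) :
    kerPair A B =
      {u | ∃ u' : Fin t → (Fin q₂ → Polynomial (∀ j, R j)),
        (∀ j : Fin t,
          (fun i => (u' j i).map (Pi.evalRingHom R j)) ∈
            kerPair (A.map (Polynomial.map (Pi.evalRingHom R j)))
                    (B.map (Polynomial.map (Pi.evalRingHom R j)))) ∧
        u = ∑ j : Fin t, (Polynomial.C ((Pi.single j 1 : ∀ i, R i))) • u' j} := by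
  ext u
  constructor
  · rintro ⟨x, hx⟩
    refine ⟨fun _ => u, fun j => ?_, ?_⟩
    · refine ⟨fun i => (x i).map (Pi.evalRingHom R j), ?_⟩
      funext i
      have h0 : A.mulVec x i + B.mulVec u i = 0 := by
        have := congrFun hx i; simpa using this
      have h1 := congrArg (Polynomial.map (Pi.evalRingHom R j)) h0
      simp only [Polynomial.map_add, Polynomial.map_zero] at h1
      simp only [Pi.add_apply, Pi.zero_apply, mulVec_polymap]
      exact h1
    · funext i
      simp only [Finset.sum_apply, Pi.smul_apply, smul_eq_mul]
      rw [← Finset.sum_mul, ← map_sum (Polynomial.C)]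
      have : (∑ j : Fin t, (Pi.single j 1 : ∀ i, R i)) = 1 := by
        have := Finset.univ_sum_single (1 : ∀ i, R i)
        simpa using this
      rw [this, _root_.map_one, one_mul]
  · rintro ⟨u', hker, rfl⟩
    choose x hx using hker
    refine ⟨fun k => ∑ j : Fin t, liftj j (x j k), ?_⟩
    funext i
    rw [Pi.add_apply, Pi.zero_apply]
    apply poly_pi_eq_zero
    intro j
    rw [Polynomial.map_add]
    have hX : (fun k => ((∑ j : Fin t, liftj j (x j k)).map (Pi.evalRingHom R j)))
        = x j := by
      funext k
      rw [Polynomial.map_sum]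
      rw [Finset.sum_eq_single j]
      · exact liftj_map_same j (x j k)
      · intro b _ hb
        exact liftj_map_ne (Ne.symm hb) (x b k)
      · simp
    have hU : (fun k => ((∑ m : Fin t,
          (Polynomial.C ((Pi.single m 1 : ∀ i, R i))) • u' m) k).map
          (Pi.evalRingHom R j))
        = fun k => (u' j k).map (Pi.evalRingHom R j) := by
      funext k
      simp only [Finset.sum_apply, Pi.smul_apply, smul_eq_mul]
      rw [Polynomial.map_sum]
      rw [Finset.sum_eq_single j]
      · simp
      · intro b _ hb
        simp [Polynomial.map_mul, Polynomial.map_C, Pi.single_eq_of_ne hb.symm]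
      · simp
    rw [← mulVec_polymap (Pi.evalRingHom R j) A _ i,
        ← mulVec_polymap (Pi.evalRingHom R j) B _ i, hX, hU]
    have := congrFun (hx j) i
    simpa using this
end

section
/- Let R = R₁ × ⋯ × R_t be a finite product of commutative rings and let 𝔠 ⊆ R[z]^n be an (n,k) family of convolutional codes over R, with restrictions C_j := π_j(𝔠) ⊆ R_j[z]^n (the image of 𝔠 under the componentwise projection R[z]^n → R_j[z]^n, equivalently 𝔠 ⊗_R R_j). Then 𝔠 is observable (i.e. R[z]^n/𝔠 is flat over R[z]) if and only if for every j the code C_j is observable (i.e. R_j[z]^n/C_j is flat over R_j[z]). -/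
open Polynomial

/-!
The constant idempotents `e_j = C (Pi.single j 1)` of `R[z]` sum to `1`, so the basic opens
`D(e_j)` cover `Spec R[z]`, and flatness can be tested after inverting each `e_j`. Inverting
`e_j` turns `R[z]` into `R_j[z]`, and, since localization is exact, `R[z]^n/𝔠` into
`R_j[z]^n` modulo the span of the image of `𝔠`, which is `C_j`.
-/

theorem Module.flat_iff_of_isLocalizedModule_away {S M ι : Type*} [CommSemiring S]
    [AddCommMonoid M] [Module S M] (e : ι → S) (he : Ideal.span (Set.range e) = ⊤)
    (T : ι → Type*) [∀ i, CommSemiring (T i)] [∀ i, Algebra S (T i)]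
    [∀ i, IsLocalization.Away (e i) (T i)]
    (Mₑ : ι → Type*) [∀ i, AddCommMonoid (Mₑ i)] [∀ i, Module S (Mₑ i)]
    [∀ i, Module (T i) (Mₑ i)] [∀ i, IsScalarTower S (T i) (Mₑ i)]
    (g : ∀ i, M →ₗ[S] Mₑ i) [∀ i, IsLocalizedModule.Away (e i) (g i)] :
    Flat S M ↔ ∀ i, Flat (T i) (Mₑ i) := by
  refine ⟨fun _ i ↦ .of_isLocalizedModule (T i) (.powers (e i)) (g i), fun H ↦ ?_⟩
  choose index h_index using fun r : Set.range e ↦ r.2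
  have (r : Set.range e) : IsLocalizedModule.Away r.1 (g (index r)) := h_index r ▸ inferInstance
  refine flat_of_isLocalized_span S M _ he (fun r ↦ Mₑ (index r)) (fun r ↦ g (index r))
    fun r ↦ ?_
  exact (flat_iff_of_isLocalization (T _) (.powers (e (index r))) _).mp (H _)

namespace Polynomial

variable {ι : Type*} [DecidableEq ι] (R : ι → Type*) [∀ i, CommSemiring (R i)]

noncomputable abbrev algebraPiEval (j : ι) : Algebra (∀ i, R i)[X] (R j)[X] :=
  (mapRingHom (Pi.evalRingHom R j)).toAlgebra

theorem isLocalization_away_C_single (j : ι) :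
    letI := algebraPiEval R j
    IsLocalization.Away (C (Pi.single j 1 : ∀ i, R i)) (R j)[X] := by
  let := algebraPiEval R j
  refine IsLocalization.away_of_isIdempotentElem_of_mul ?_ (fun x y ↦ ?_) ?_
  · rw [IsIdempotentElem, ← C_mul, ← Pi.single_mul, mul_one]
  · simp only [Polynomial.ext_iff, coeff_C_mul, ← Pi.single_mul_left, one_mul,
      (Pi.single_injective j).eq_iff, RingHom.algebraMap_toAlgebra, coe_mapRingHom, coeff_map,
      Pi.evalRingHom_apply]
  · exact map_surjective _ fun y ↦ ⟨Pi.single j y, Pi.single_eq_same j y⟩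

theorem span_range_C_single_eq_top [Fintype ι] :
    Ideal.span (Set.range fun j ↦ C (Pi.single j 1 : ∀ i, R i)) = ⊤ := by
  rw [Ideal.eq_top_iff_one, ← map_one C, ← Finset.univ_sum_single (1 : ∀ i, R i), map_sum]
  exact Ideal.sum_mem _ fun j _ ↦ Ideal.subset_span ⟨j, rfl⟩

end Polynomial

theorem observable_iff_components_general {t n : ℕ} (R : Fin t → Type*)
    [∀ j, CommRing (R j)]
    (𝔠 : Submodule (Polynomial (∀ j, R j)) (Fin n → Polynomial (∀ j, R j))) :
    Module.Flat (Polynomial (∀ j, R j)) ((Fin n → Polynomial (∀ j, R j)) ⧸ 𝔠) ↔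
      ∀ j : Fin t, Module.Flat (Polynomial (R j))
        ((Fin n → Polynomial (R j)) ⧸
          Submodule.span (Polynomial (R j))
            ((fun v : Fin n → Polynomial (∀ i, R i) =>
              fun l => (v l).map (Pi.evalRingHom R j)) '' (𝔠 : Set _))) := by
  let := algebraPiEval R
  have := isLocalization_away_C_single R
  let f (j : Fin t) : (Fin n → (∀ i, R i)[X]) →ₗ[(∀ i, R i)[X]] (Fin n → (R j)[X]) :=
    .pi fun l ↦ Algebra.linearMap _ _ ∘ₗ .proj l
  rw [Module.flat_iff_of_isLocalizedModule_away (fun j ↦ C (Pi.single j 1))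
    (span_range_C_single_eq_top R) (fun j ↦ (R j)[X]) _
    fun j ↦ 𝔠.toLocalizedQuotient' (R j)[X] (.powers (C (Pi.single j 1))) (f j)]
  refine forall_congr' fun j ↦ ?_
  rw [Submodule.localized'_eq_span]
  rfl

/-- Let `R = R₁ × ⋯ × R_t` be a finite product of commutative rings and
`𝔠 ⊆ R[z]^n` an `(n,k)` family of convolutional codes (a free `R[z]`-submodule
of rank `k` with `R`-flat quotient).  Then `𝔠` is observable (the quotient
`R[z]^n/𝔠` is `R[z]`-flat) iff each restriction `C_j = π_j(𝔠)` is observable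
(each `R_j[z]^n/C_j` is `R_j[z]`-flat). -/
theorem observable_iff_components {t n k : ℕ} (R : Fin t → Type*)
    [∀ j, CommRing (R j)]
    (𝔠 : Submodule (Polynomial (∀ j, R j)) (Fin n → Polynomial (∀ j, R j)))
    (hfree : Nonempty (Module.Basis (Fin k) (Polynomial (∀ j, R j)) 𝔠))
    (hflat : Module.Flat (∀ j, R j) ((Fin n → Polynomial (∀ j, R j)) ⧸ 𝔠)) :
    Module.Flat (Polynomial (∀ j, R j)) ((Fin n → Polynomial (∀ j, R j)) ⧸ 𝔠) ↔
      ∀ j : Fin t, Module.Flat (Polynomial (R j))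
        ((Fin n → Polynomial (R j)) ⧸
          Submodule.span (Polynomial (R j))
            ((fun v : Fin n → Polynomial (∀ i, R i) =>
              fun l => (v l).map (Pi.evalRingHom R j)) '' (𝔠 : Set _))) :=
  observable_iff_components_general R 𝔠
end

section
/- Let R = R₁ × ⋯ × R_t be a finite product of commutative rings and let 𝔠 ⊆ R[z]^n be an (n,k) family of convolutional codes over R whose restrictions C_j := π_j(𝔠) each admit a minimal first order representation with parameters (n,k,δ) over R_j, unique up to equivalence. Then 𝔠 admits a minimal first order representation with parameters (n,k,δ) over R, and it is unique up to equivalence. -/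
open Matrix Polynomial

/-- `(K,L,M)` is a first order representation (with parameters `(n,k,δ)`) of
the code `𝔠 ⊆ S[z]^n`:
`𝔠 = {v(z) | ∃ x(z), (zK+L)x(z) + Mv(z) = 0}`. -/
def IsFOR {S : Type*} [CommRing S] {n k δ : ℕ}
    (𝔠 : Submodule (Polynomial S) (Fin n → Polynomial S))
    (K L : Matrix (Fin (δ + n - k)) (Fin δ) S)
    (M : Matrix (Fin (δ + n - k)) (Fin n) S) : Prop :=
  ∀ v : Fin n → Polynomial S,
    v ∈ 𝔠 ↔ ∃ x : Fin δ → Polynomial S,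
      ((Polynomial.X : Polynomial S) • K.map Polynomial.C + L.map Polynomial.C).mulVec x
        + (M.map Polynomial.C).mulVec v = 0

/-- Minimality conditions for a first order representation `(K,L,M)`:
(1) `K : S^δ → S^{δ+n-k}` is injective with flat cokernel,
(2) `(K M) : S^{δ+n} → S^{δ+n-k}` is surjective,
(3) `(zK+L M) : S[z]^{δ+n} → S[z]^{δ+n-k}` is surjective. -/
def MinimalFOR {S : Type*} [CommRing S] {n k δ : ℕ}
    (K L : Matrix (Fin (δ + n - k)) (Fin δ) S)
    (M : Matrix (Fin (δ + n - k)) (Fin n) S) : Prop :=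
  Function.Injective K.mulVecLin ∧
  Module.Flat S ((Fin (δ + n - k) → S) ⧸ LinearMap.range K.mulVecLin) ∧
  Function.Surjective (Matrix.fromCols K M).mulVecLin ∧
  Function.Surjective (Matrix.fromCols
      ((Polynomial.X : Polynomial S) • K.map Polynomial.C + L.map Polynomial.C)
      (M.map Polynomial.C)).mulVecLin

/-- Two first order representations are equivalent if they differ by invertible
matrices `T`, `S`: `(K',L',M') = (T K S⁻¹, T L S⁻¹, T M)`. -/
def EquivFOR {S : Type*} [CommRing S] {n k δ : ℕ}
    (K L : Matrix (Fin (δ + n - k)) (Fin δ) S)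
    (M : Matrix (Fin (δ + n - k)) (Fin n) S)
    (K' L' : Matrix (Fin (δ + n - k)) (Fin δ) S)
    (M' : Matrix (Fin (δ + n - k)) (Fin n) S) : Prop :=
  ∃ (T : (Matrix (Fin (δ + n - k)) (Fin (δ + n - k)) S)ˣ)
    (Sm : (Matrix (Fin δ) (Fin δ) S)ˣ),
    K' = (T : Matrix (Fin (δ + n - k)) (Fin (δ + n - k)) S) * K * ((Sm⁻¹ : (Matrix (Fin δ) (Fin δ) S)ˣ) : Matrix (Fin δ) (Fin δ) S) ∧
    L' = (T : Matrix (Fin (δ + n - k)) (Fin (δ + n - k)) S) * L * ((Sm⁻¹ : (Matrix (Fin δ) (Fin δ) S)ˣ) : Matrix (Fin δ) (Fin δ) S) ∧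
    M' = (T : Matrix _ _ S) * M

/-- The restriction `C_j = π_j(𝔠)` of a code over a product ring to its `j`-th
component, as an `R_j[z]`-submodule. -/
noncomputable def restrictCode {t n : ℕ} {R : Fin t → Type*} [∀ j, CommRing (R j)]
    (𝔠 : Submodule (Polynomial (∀ j, R j)) (Fin n → Polynomial (∀ j, R j)))
    (j : Fin t) : Submodule (Polynomial (R j)) (Fin n → Polynomial (R j)) :=
  Submodule.span (Polynomial (R j))
    ((fun v : Fin n → Polynomial (∀ i, R i) =>
      fun l => (v l).map (Pi.evalRingHom R j)) '' (𝔠 : Set _))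


/-! Over `R = ∏ R_j` everything splits into components. The projections identify `R[z]` with
`∏ R_j[z]`; vectors and matrices over `R` or `R[z]` with families of vectors and matrices over the
`R_j` or `R_j[z]`; units with families of units; and `𝔠` with the family of its restrictions `C_j`,
since `𝔠` is cut into pieces by the idempotents `e_j`. The cokernel of `K` is the product of the
cokernels of the `π_j K`, and `R_j` is the localization of `R` at `e_j`, so flatness splits too.
Hence `(K,L,M)` is a minimal first order representation of `𝔠` iff every `π_j (K,L,M)` is one of
`C_j`: gluing the component representations gives existence, and gluing componentwise equivalences
gives uniqueness. -/

section ProductFamily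

variable {ι S : Type*} {T : ι → Type*} [CommRing S] [∀ i, CommRing (T i)] {f : ∀ i, S →+* T i}
  {α m n p : Type*}

theorem funext_of_injective_pi (hf : Function.Injective (RingHom.pi f)) {u v : α → S}
    (h : ∀ i, f i ∘ u = f i ∘ v) : u = v :=
  funext fun a => hf <| funext fun i => congrFun (h i) a

theorem exists_comp_eq_of_surjective_pi (hf : Function.Surjective (RingHom.pi f))
    (w : ∀ i, α → T i) : ∃ u : α → S, ∀ i, f i ∘ u = w i := by
  choose u hu using fun a => hf fun i => w i a
  exact ⟨u, fun i => funext fun a => congrFun (hu a) i⟩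

theorem exists_comp_eq_pi_single_of_surjective_pi [DecidableEq ι]
    (hf : Function.Surjective (RingHom.pi f)) (i : ι) (w : α → T i) :
    ∃ u : α → S, f i ∘ u = w ∧ ∀ j ≠ i, f j ∘ u = 0 := by
  obtain ⟨u, hu⟩ := exists_comp_eq_of_surjective_pi hf (Pi.single i w)
  exact ⟨u, by simpa using hu i, fun j hj => by simpa [hj] using hu j⟩

theorem Matrix.ext_of_injective_pi (hf : Function.Injective (RingHom.pi f))
    {A B : Matrix m n S} (h : ∀ i, A.map (f i) = B.map (f i)) : A = B :=
  Matrix.ext fun r c => hf <| funext fun i => congrFun₂ (h i) r c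

theorem Matrix.exists_map_eq_of_surjective_pi (hf : Function.Surjective (RingHom.pi f))
    (A : ∀ i, Matrix m n (T i)) : ∃ B : Matrix m n S, ∀ i, B.map (f i) = A i := by
  choose B hB using fun r c => hf fun i => A i r c
  exact ⟨Matrix.of B, fun i => Matrix.ext fun r c => congrFun (hB r c) i⟩

theorem Matrix.exists_unit_map_eq_of_bijective_pi (hf : Function.Bijective (RingHom.pi f))
    [Fintype n] [DecidableEq n] (U : ∀ i, (Matrix n n (T i))ˣ) :
    ∃ V : (Matrix n n S)ˣ, ∀ i, (V : Matrix n n S).map (f i) = U i ∧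
      ((V⁻¹ : (Matrix n n S)ˣ) : Matrix n n S).map (f i) = ↑(U i)⁻¹ := by
  obtain ⟨A, hA⟩ := Matrix.exists_map_eq_of_surjective_pi hf.2 fun i => (U i : Matrix n n (T i))
  obtain ⟨B, hB⟩ :=
    Matrix.exists_map_eq_of_surjective_pi hf.2 fun i => (↑(U i)⁻¹ : Matrix n n (T i))
  have hAB : A * B = 1 := Matrix.ext_of_injective_pi hf.1 fun i => by
    rw [Matrix.map_mul, hA, hB, Units.mul_inv, Matrix.map_one _ (map_zero _) (map_one _)]
  have hBA : B * A = 1 := Matrix.ext_of_injective_pi hf.1 fun i => by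
    rw [Matrix.map_mul, hA, hB, Units.inv_mul, Matrix.map_one _ (map_zero _) (map_one _)]
  exact ⟨⟨A, B, hAB, hBA⟩, fun i => ⟨hA i, hB i⟩⟩

theorem mem_iff_forall_comp_mem_image_of_bijective_pi [Fintype ι]
    (hf : Function.Bijective (RingHom.pi f)) (N : Submodule S (α → S)) (u : α → S) :
    u ∈ N ↔ ∀ i, f i ∘ u ∈ (f i ∘ ·) '' (N : Set (α → S)) := by
  classical
  refine ⟨fun hu i => ⟨u, hu, rfl⟩, fun h => ?_⟩
  choose w hw hwu using h
  -- the orthogonal idempotents `e i` cutting out the factors: `u = ∑ e i • w i`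
  obtain ⟨e, he⟩ :=
    exists_comp_eq_of_surjective_pi hf.2 fun j (i : ι) => if i = j then (1 : T j) else 0
  have he' : ∀ i j, f j (e i) = if i = j then 1 else 0 := fun i j => congrFun (he j) i
  have hu : u = ∑ i, e i • w i := funext_of_injective_pi hf.1 fun j => by
    ext a
    have := congrFun (hwu j) a
    simp_all [Finset.sum_apply]
  rw [hu]
  exact N.sum_mem fun i _ => N.smul_mem _ (hw i)

variable [Fintype n]

theorem RingHom.comp_mulVec {T' : Type*} [CommRing T'] (g : S →+* T') (A : Matrix m n S)
    (u : n → S) : g ∘ (A *ᵥ u) = A.map g *ᵥ (g ∘ u) :=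
  funext (RingHom.map_mulVec g A u)

theorem mem_range_mulVec_iff_of_bijective_pi (hf : Function.Bijective (RingHom.pi f))
    (A : Matrix m n S) (v : m → S) :
    v ∈ Set.range A.mulVec ↔ ∀ i, f i ∘ v ∈ Set.range (A.map (f i)).mulVec := by
  refine ⟨?_, fun h => ?_⟩
  · rintro ⟨u, rfl⟩ i
    exact ⟨f i ∘ u, ((f i).comp_mulVec _ _).symm⟩
  · choose u hu using h
    obtain ⟨x, hx⟩ := exists_comp_eq_of_surjective_pi hf.2 u
    exact ⟨x, funext_of_injective_pi hf.1 fun i => by rw [RingHom.comp_mulVec, hx, hu]⟩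

theorem surjective_mulVecLin_iff_of_bijective_pi (hf : Function.Bijective (RingHom.pi f))
    (A : Matrix m n S) :
    Function.Surjective A.mulVecLin ↔ ∀ i, Function.Surjective (A.map (f i)).mulVecLin := by
  classical
  refine ⟨fun h i w => ?_,
    fun h v => (mem_range_mulVec_iff_of_bijective_pi hf A v).2 fun i => h i _⟩
  obtain ⟨v, hv, -⟩ := exists_comp_eq_pi_single_of_surjective_pi hf.2 i w
  obtain ⟨u, rfl⟩ := h v
  exact ⟨f i ∘ u, by rw [← hv]; exact ((f i).comp_mulVec _ _).symm⟩

theorem injective_mulVecLin_iff_of_bijective_pi (hf : Function.Bijective (RingHom.pi f))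
    (A : Matrix m n S) :
    Function.Injective A.mulVecLin ↔ ∀ i, Function.Injective (A.map (f i)).mulVecLin := by
  classical
  simp only [injective_iff_map_eq_zero, Matrix.mulVecLin_apply]
  refine ⟨fun h i w hw => ?_, fun h u hu => funext_of_injective_pi hf.1 fun i => ?_⟩
  · obtain ⟨v, hv, hv'⟩ := exists_comp_eq_pi_single_of_surjective_pi hf.2 i w
    suffices v = 0 by rw [← hv, this, map_comp_zero]
    refine h v (funext_of_injective_pi hf.1 fun j => ?_)
    rw [RingHom.comp_mulVec]
    rcases eq_or_ne j i with rfl | hj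
    · rw [hv, hw, map_comp_zero]
    · rw [hv' j hj, Matrix.mulVec_zero, map_comp_zero]
  · rw [map_comp_zero]
    exact h i _ (by rw [← RingHom.comp_mulVec, hu, map_comp_zero])

theorem exists_mulVec_add_mulVec_eq_zero_iff_of_bijective_pi [Fintype p]
    (hf : Function.Bijective (RingHom.pi f)) (A : Matrix m n S) (B : Matrix m p S) (v : p → S) :
    (∃ x, A *ᵥ x + B *ᵥ v = 0) ↔
      ∀ i, ∃ x, A.map (f i) *ᵥ x + B.map (f i) *ᵥ (f i ∘ v) = 0 := by
  have hmap : ∀ i x, f i ∘ (A *ᵥ x + B *ᵥ v) =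
      A.map (f i) *ᵥ (f i ∘ x) + B.map (f i) *ᵥ (f i ∘ v) :=
    fun i x => funext fun r => by simp [RingHom.map_mulVec]
  refine ⟨fun ⟨x, hx⟩ i => ⟨f i ∘ x, by rw [← hmap, hx, map_comp_zero]⟩, fun h => ?_⟩
  choose x hx using h
  obtain ⟨y, hy⟩ := exists_comp_eq_of_surjective_pi hf.2 x
  exact ⟨y, funext_of_injective_pi hf.1 fun i => by rw [hmap, hy, hx, map_comp_zero]⟩

end ProductFamily

theorem Submodule.coe_span_image_comp {S T α : Type*} [CommRing S] [CommRing T] (g : S →+* T)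
    (hg : Function.Surjective g) (N : Submodule S (α → S)) :
    (span T ((g ∘ ·) '' (N : Set (α → S))) : Set (α → T)) = (g ∘ ·) '' N := by
  have : RingHomSurjective g := ⟨hg⟩
  let φ : (α → S) →ₛₗ[g] (α → T) :=
    { toFun := (g ∘ ·)
      map_add' := fun _ _ => funext fun _ => map_add g _ _
      map_smul' := fun _ _ => funext fun _ => map_mul g _ _ }
  change (span T (φ '' N) : Set (α → T)) = φ '' N
  rw [span_image, span_eq, map_coe]

theorem Module.flat_pi_iff {S ι : Type*} [CommSemiring S] [Fintype ι] {M : ι → Type*}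
    [∀ i, AddCommMonoid (M i)] [∀ i, Module S (M i)] :
    Module.Flat S (Π i, M i) ↔ ∀ i, Module.Flat S (M i) := by
  classical
  rw [← Module.Flat.directSum_iff]
  have e := DirectSum.linearEquivFunOnFintype S ι M
  exact ⟨fun _ => .of_linearEquiv e, fun _ => .of_linearEquiv e.symm⟩

section ProductRing

variable {ι : Type*} {R : ι → Type*} [∀ i, CommRing (R i)]

theorem bijective_pi_evalRingHom : Function.Bijective (RingHom.pi (Pi.evalRingHom R)) :=
  Function.bijective_id

theorem bijective_pi_mapRingHom_evalRingHom [Fintype ι] :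
    Function.Bijective (RingHom.pi fun i => mapRingHom (Pi.evalRingHom R i)) := by
  classical
  refine ⟨fun p q h => Polynomial.ext fun k => funext fun i => ?_, fun q => ?_⟩
  · simpa using congrArg (coeff · k) (congrFun h i)
  · choose p hp using fun i =>
      Polynomial.map_surjective (Pi.evalRingHom R i) (Function.surjective_eval i) (q i)
    refine ⟨∑ i, C (Pi.single i 1) * p i, funext fun j => ?_⟩
    simp only [RingHom.pi_apply, coe_mapRingHom, Polynomial.map_sum, Polynomial.map_mul, map_C]
    rw [Finset.sum_eq_single j (fun i _ hi => by simp [Pi.single_eq_of_ne' hi]) (by simp)]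
    simp [hp]

abbrev Pi.evalAlgebra (i : ι) : Algebra (Π j, R j) (R i) := (Pi.evalRingHom R i).toAlgebra

attribute [local instance] Pi.evalAlgebra

theorem Pi.flat_iff_flat_component [DecidableEq ι] (i : ι) (N : Type*) [AddCommMonoid N]
    [Module (R i) N] [Module (Π j, R j) N] [IsScalarTower (Π j, R j) (R i) N] :
    Module.Flat (Π j, R j) N ↔ Module.Flat (R i) N := by
  have : IsLocalization.Away (Pi.single i 1 : Π j, R j) (R i) :=
    IsLocalization.away_of_isIdempotentElem (by simp [IsIdempotentElem, ← Pi.single_mul_left])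
      (RingHom.ker_evalRingHom _ _) (Pi.evalRingHom R i).surjective
  exact (Module.flat_iff_of_isLocalization (R i) (.powers (Pi.single i 1)) N).symm

variable {m n : Type*} [Fintype n]

noncomputable def Matrix.quotientRangeMulVecLinEquivPi [Fintype ι] (A : Matrix m n (Π i, R i)) :
    ((m → Π i, R i) ⧸ LinearMap.range A.mulVecLin) ≃ₗ[Π i, R i]
      Π i, (m → R i) ⧸ LinearMap.range (A.map (Pi.evalRingHom R i)).mulVecLin :=
  let φ := LinearMap.pi fun i =>
    ((LinearMap.range (A.map (Pi.evalRingHom R i)).mulVecLin).mkQ.restrictScalars (Π j, R j)) ∘ₗ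
      LinearMap.compLeft (Algebra.linearMap (Π j, R j) (R i)) m
  have hker : LinearMap.ker φ = LinearMap.range A.mulVecLin := by
    ext v
    simp only [LinearMap.mem_ker, LinearMap.mem_range, Matrix.mulVecLin_apply, ← Set.mem_range,
      mem_range_mulVec_iff_of_bijective_pi bijective_pi_evalRingHom A v, funext_iff (f := φ v)]
    simp only [φ, LinearMap.pi_apply, LinearMap.coe_comp, LinearMap.coe_restrictScalars,
      Function.comp_apply, Submodule.mkQ_apply, Pi.zero_apply, Submodule.Quotient.mk_eq_zero,
      LinearMap.mem_range, Matrix.mulVecLin_apply, Set.mem_range]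
    rfl
  have hsurj : Function.Surjective φ := fun x => by
    choose w hw using fun i => Submodule.Quotient.mk_surjective _ (x i)
    exact ⟨fun r i => w i r, funext hw⟩
  (Submodule.quotEquivOfEq _ _ hker.symm).trans (φ.quotKerEquivOfSurjective hsurj)

theorem flat_quotient_range_mulVecLin_iff [Fintype ι] [DecidableEq ι]
    (A : Matrix m n (Π i, R i)) :
    Module.Flat (Π i, R i) ((m → Π i, R i) ⧸ LinearMap.range A.mulVecLin) ↔
      ∀ i, Module.Flat (R i)
        ((m → R i) ⧸ LinearMap.range (A.map (Pi.evalRingHom R i)).mulVecLin) := by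
  rw [Module.Flat.equiv_iff A.quotientRangeMulVecLinEquivPi]
  exact Module.flat_pi_iff.trans (forall_congr' fun i => Pi.flat_iff_flat_component i _)

end ProductRing

theorem Matrix.map_C_map_polynomial {S T ρ σ : Type*} [CommRing S] [CommRing T] (g : S →+* T)
    (M : Matrix ρ σ S) : (M.map C).map (Polynomial.map g) = (M.map g).map C := by
  ext; simp

theorem Matrix.map_pencil {S T ρ σ : Type*} [CommRing S] [CommRing T] (g : S →+* T)
    (K L : Matrix ρ σ S) :
    ((X : S[X]) • K.map C + L.map C).map (Polynomial.map g) =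
      (X : T[X]) • (K.map g).map C + (L.map g).map C := by
  ext; simp

theorem equivFOR_of_forall_map {ι S : Type*} {T : ι → Type*} [CommRing S] [∀ i, CommRing (T i)]
    {f : ∀ i, S →+* T i} (hf : Function.Bijective (RingHom.pi f)) {n k δ : ℕ}
    {K L K' L' : Matrix (Fin (δ + n - k)) (Fin δ) S} {M M' : Matrix (Fin (δ + n - k)) (Fin n) S}
    (h : ∀ i, EquivFOR (K.map (f i)) (L.map (f i)) (M.map (f i))
      (K'.map (f i)) (L'.map (f i)) (M'.map (f i))) :
    EquivFOR K L M K' L' M' := by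
  choose T U hK hL hM using h
  obtain ⟨T₀, hT₀⟩ := Matrix.exists_unit_map_eq_of_bijective_pi hf T
  obtain ⟨U₀, hU₀⟩ := Matrix.exists_unit_map_eq_of_bijective_pi hf U
  refine ⟨T₀, U₀, ?_, ?_, ?_⟩ <;> refine Matrix.ext_of_injective_pi hf.1 fun i => ?_
  · rw [hK, Matrix.map_mul, Matrix.map_mul, (hT₀ i).1, (hU₀ i).2]
  · rw [hL, Matrix.map_mul, Matrix.map_mul, (hT₀ i).1, (hU₀ i).2]
  -- the product `T * M` in `EquivFOR` elaborates through `CStarMatrix`, so `rw` cannot see it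
  · exact (hM i).trans (by rw [← (hT₀ i).1]; exact Matrix.map_mul.symm)

section ProductCode

variable {t n k δ : ℕ} {R : Fin t → Type*} [∀ j, CommRing (R j)]

theorem isFOR_iff_forall_restrictCode (𝔠 : Submodule (∀ j, R j)[X] (Fin n → (∀ j, R j)[X]))
    (K L : Matrix (Fin (δ + n - k)) (Fin δ) (∀ j, R j))
    (M : Matrix (Fin (δ + n - k)) (Fin n) (∀ j, R j)) :
    IsFOR 𝔠 K L M ↔ ∀ j, IsFOR (restrictCode 𝔠 j) (K.map (Pi.evalRingHom R j))
      (L.map (Pi.evalRingHom R j)) (M.map (Pi.evalRingHom R j)) := by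
  have hF := bijective_pi_mapRingHom_evalRingHom (R := R)
  have hsol : ∀ v, (∃ x, ((X : (∀ j, R j)[X]) • K.map C + L.map C) *ᵥ x + M.map C *ᵥ v = 0) ↔
      ∀ j, ∃ x, ((X : (R j)[X]) • (K.map (Pi.evalRingHom R j)).map C
          + (L.map (Pi.evalRingHom R j)).map C) *ᵥ x
        + (M.map (Pi.evalRingHom R j)).map C *ᵥ (fun l => (v l).map (Pi.evalRingHom R j)) = 0 := by
    intro v
    rw [exists_mulVec_add_mulVec_eq_zero_iff_of_bijective_pi hF]
    simp only [coe_mapRingHom, Matrix.map_pencil, Matrix.map_C_map_polynomial]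
    rfl
  have hcode : ∀ j, (restrictCode 𝔠 j : Set (Fin n → (R j)[X])) =
      (fun v l => (v l).map (Pi.evalRingHom R j)) '' (𝔠 : Set (Fin n → (∀ j, R j)[X])) :=
    fun j => Submodule.coe_span_image_comp (mapRingHom (Pi.evalRingHom R j))
      (Polynomial.map_surjective _ (Function.surjective_eval j)) 𝔠
  refine ⟨fun h j w => ?_, fun h v => ?_⟩
  · rw [← SetLike.mem_coe, hcode]
    refine ⟨?_, fun hw => ?_⟩
    · rintro ⟨v, hv, rfl⟩
      exact (hsol v).1 ((h v).1 hv) j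
    · obtain ⟨v, hv, hv'⟩ := exists_comp_eq_pi_single_of_surjective_pi hF.2 j w
      refine ⟨v, (h v).2 ((hsol v).2 fun i => ?_), hv⟩
      rcases eq_or_ne i j with rfl | hi
      · subst hv
        exact hw
      · exact ⟨0, by rw [show (fun l => (v l).map (Pi.evalRingHom R i)) = 0 from hv' i hi]; simp⟩
  · rw [mem_iff_forall_comp_mem_image_of_bijective_pi hF 𝔠 v, hsol]
    refine forall_congr' fun j => ?_
    rw [← h j, ← SetLike.mem_coe, hcode]
    rfl

theorem minimalFOR_iff_forall_map (K L : Matrix (Fin (δ + n - k)) (Fin δ) (∀ j, R j))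
    (M : Matrix (Fin (δ + n - k)) (Fin n) (∀ j, R j)) :
    MinimalFOR (n := n) (k := k) K L M ↔ ∀ j, MinimalFOR (n := n) (k := k)
      (K.map (Pi.evalRingHom R j)) (L.map (Pi.evalRingHom R j)) (M.map (Pi.evalRingHom R j)) := by
  have hR := bijective_pi_evalRingHom (R := R)
  refine (and_congr (injective_mulVecLin_iff_of_bijective_pi hR K) <|
    and_congr (flat_quotient_range_mulVecLin_iff K) <|
    and_congr (surjective_mulVecLin_iff_of_bijective_pi hR _)
      (surjective_mulVecLin_iff_of_bijective_pi
        (bijective_pi_mapRingHom_evalRingHom (R := R)) _)).trans ?_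
  simp only [MinimalFOR, Matrix.fromCols_map, coe_mapRingHom, Matrix.map_pencil,
    Matrix.map_C_map_polynomial, forall_and]

end ProductCode

theorem exists_unique_minimal_FOR_of_components_general {t n k δ : ℕ}
    (R : Fin t → Type*) [∀ j, CommRing (R j)]
    (𝔠 : Submodule (Polynomial (∀ j, R j)) (Fin n → Polynomial (∀ j, R j)))
    (hex : ∀ j : Fin t,
      ∃ (K L : Matrix (Fin (δ + n - k)) (Fin δ) (R j))
        (M : Matrix (Fin (δ + n - k)) (Fin n) (R j)),
        IsFOR (restrictCode 𝔠 j) K L M ∧ MinimalFOR (n := n) (k := k) K L M)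
    (huniq : ∀ j : Fin t,
      ∀ (K L : Matrix (Fin (δ + n - k)) (Fin δ) (R j))
        (M : Matrix (Fin (δ + n - k)) (Fin n) (R j))
        (K' L' : Matrix (Fin (δ + n - k)) (Fin δ) (R j))
        (M' : Matrix (Fin (δ + n - k)) (Fin n) (R j)),
        IsFOR (restrictCode 𝔠 j) K L M → MinimalFOR (n := n) (k := k) K L M →
        IsFOR (restrictCode 𝔠 j) K' L' M' → MinimalFOR (n := n) (k := k) K' L' M' →
        EquivFOR K L M K' L' M') :
    (∃ (K L : Matrix (Fin (δ + n - k)) (Fin δ) (∀ j, R j))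
      (M : Matrix (Fin (δ + n - k)) (Fin n) (∀ j, R j)),
      IsFOR 𝔠 K L M ∧ MinimalFOR (n := n) (k := k) K L M) ∧
    (∀ (K L : Matrix (Fin (δ + n - k)) (Fin δ) (∀ j, R j))
      (M : Matrix (Fin (δ + n - k)) (Fin n) (∀ j, R j))
      (K' L' : Matrix (Fin (δ + n - k)) (Fin δ) (∀ j, R j))
      (M' : Matrix (Fin (δ + n - k)) (Fin n) (∀ j, R j)),
      IsFOR 𝔠 K L M → MinimalFOR (n := n) (k := k) K L M →
      IsFOR 𝔠 K' L' M' → MinimalFOR (n := n) (k := k) K' L' M' →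
      EquivFOR K L M K' L' M') := by
  have hR := bijective_pi_evalRingHom (R := R)
  refine ⟨?_, fun K L M K' L' M' hFOR hMin hFOR' hMin' => ?_⟩
  · choose K L M hFOR hMin using hex
    obtain ⟨K₀, hK₀⟩ := Matrix.exists_map_eq_of_surjective_pi hR.2 K
    obtain ⟨L₀, hL₀⟩ := Matrix.exists_map_eq_of_surjective_pi hR.2 L
    obtain ⟨M₀, hM₀⟩ := Matrix.exists_map_eq_of_surjective_pi hR.2 M
    refine ⟨K₀, L₀, M₀, (isFOR_iff_forall_restrictCode 𝔠 _ _ _).2 fun j => ?_,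
      (minimalFOR_iff_forall_map _ _ _).2 fun j => ?_⟩ <;> rw [hK₀, hL₀, hM₀]
    exacts [hFOR j, hMin j]
  · rw [isFOR_iff_forall_restrictCode] at hFOR hFOR'
    rw [minimalFOR_iff_forall_map] at hMin hMin'
    exact equivFOR_of_forall_map hR fun j =>
      huniq j _ _ _ _ _ _ (hFOR j) (hMin j) (hFOR' j) (hMin' j)

/-- A finite product of rings with representations is a ring with
representations: if each restriction `C_j` of an `(n,k)` family of
convolutional codes `𝔠` over `R = R₁ × ⋯ × R_t` admits a minimal first order
representation with parameters `(n,k,δ)`, unique up to equivalence, then `𝔠`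
admits a minimal first order representation with parameters `(n,k,δ)`, unique
up to equivalence. -/
theorem exists_unique_minimal_FOR_of_components {t n k δ : ℕ} (hk : k ≤ n)
    (R : Fin t → Type*) [∀ j, CommRing (R j)]
    (𝔠 : Submodule (Polynomial (∀ j, R j)) (Fin n → Polynomial (∀ j, R j)))
    (hfree : Nonempty (Module.Basis (Fin k) (Polynomial (∀ j, R j)) 𝔠))
    (hflat : Module.Flat (∀ j, R j) ((Fin n → Polynomial (∀ j, R j)) ⧸ 𝔠))
    (hex : ∀ j : Fin t,
      ∃ (K L : Matrix (Fin (δ + n - k)) (Fin δ) (R j))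
        (M : Matrix (Fin (δ + n - k)) (Fin n) (R j)),
        IsFOR (restrictCode 𝔠 j) K L M ∧ MinimalFOR (n := n) (k := k) K L M)
    (huniq : ∀ j : Fin t,
      ∀ (K L : Matrix (Fin (δ + n - k)) (Fin δ) (R j))
        (M : Matrix (Fin (δ + n - k)) (Fin n) (R j))
        (K' L' : Matrix (Fin (δ + n - k)) (Fin δ) (R j))
        (M' : Matrix (Fin (δ + n - k)) (Fin n) (R j)),
        IsFOR (restrictCode 𝔠 j) K L M → MinimalFOR (n := n) (k := k) K L M →
        IsFOR (restrictCode 𝔠 j) K' L' M' → MinimalFOR (n := n) (k := k) K' L' M' →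
        EquivFOR K L M K' L' M') :
    (∃ (K L : Matrix (Fin (δ + n - k)) (Fin δ) (∀ j, R j))
      (M : Matrix (Fin (δ + n - k)) (Fin n) (∀ j, R j)),
      IsFOR 𝔠 K L M ∧ MinimalFOR (n := n) (k := k) K L M) ∧
    (∀ (K L : Matrix (Fin (δ + n - k)) (Fin δ) (∀ j, R j))
      (M : Matrix (Fin (δ + n - k)) (Fin n) (∀ j, R j))
      (K' L' : Matrix (Fin (δ + n - k)) (Fin δ) (∀ j, R j))
      (M' : Matrix (Fin (δ + n - k)) (Fin n) (∀ j, R j)),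
      IsFOR 𝔠 K L M → MinimalFOR (n := n) (k := k) K L M →
      IsFOR 𝔠 K' L' M' → MinimalFOR (n := n) (k := k) K' L' M' →
      EquivFOR K L M K' L' M') :=
  exists_unique_minimal_FOR_of_components_general R 𝔠 hex huniq
end
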